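/- arXiv:0905.0228 — 3 statements merged into one kernel-verified Lean document; each statement's English description precedes it below -/
import Mathlib

section
/- The q-derivative of the rescaled discrete q-Hermite polynomials II satisfies D_q h_n(x,s;q) = [n]_q·h_{n−1}(qx,s;q) for all n ≥ 1, where the q-derivative acts on the variable x. -/
open Polynomial

noncomputable section

abbrev Kq : Type := RatFunc ℚ
def q : Kq := RatFunc.X
abbrev Ks : Type := Polynomial Kq
abbrev Ax : Type := Polynomial Ks
def qInt (n : ℕ) : Kq := ∑ i ∈ Finset.range n, q ^ i
def qDeriv (p : Ax) : Ax :=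
  p.sum fun m a => Polynomial.C a * Polynomial.C (Polynomial.C (qInt m)) * X ^ (m - 1)

lemma qInt_zero : qInt 0 = 0 := Finset.sum_range_zero _

lemma qInt_succ (m : ℕ) : qInt (m + 1) = qInt m + q ^ m := Finset.sum_range_succ _ _

lemma qDeriv_monomial (m : ℕ) (a : Ks) :
    qDeriv (monomial m a) = Polynomial.C a * Polynomial.C (Polynomial.C (qInt m)) * X ^ (m - 1) := by
  unfold qDeriv
  rw [Polynomial.sum_monomial_index]
  simp

lemma qDeriv_add (p r : Ax) : qDeriv (p + r) = qDeriv p + qDeriv r := by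
  unfold qDeriv
  rw [Polynomial.sum_add_index] <;> intros <;> simp [add_mul]

lemma qDeriv_C_mul (b : Ks) (p : Ax) : qDeriv (Polynomial.C b * p) = Polynomial.C b * qDeriv p := by
  induction p using Polynomial.induction_on' with
  | add p r hp hr => rw [mul_add, qDeriv_add, hp, hr, qDeriv_add, mul_add]
  | monomial m a =>
    rw [C_mul_monomial, qDeriv_monomial, qDeriv_monomial, C_mul]; ring

lemma qDeriv_sub (p r : Ax) : qDeriv (p - r) = qDeriv p - qDeriv r := by
  have : p - r = p + Polynomial.C (-1 : Ks) * r := by rw [map_neg, map_one]; ring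
  rw [this, qDeriv_add, qDeriv_C_mul, map_neg, map_one]; ring

lemma qDeriv_X_mul (p : Ax) :
    qDeriv (X * p) = X * qDeriv p + p.comp (Polynomial.C (Polynomial.C q) * X) := by
  induction p using Polynomial.induction_on' with
  | add p r hp hr => rw [mul_add, qDeriv_add, hp, hr, qDeriv_add, add_comp]; ring
  | monomial m a =>
    rw [X_mul_monomial, qDeriv_monomial, qDeriv_monomial, monomial_comp]
    cases m with
    | zero => simp [qInt_zero, qInt_succ]
    | succ m =>
      rw [qInt_succ (m + 1), map_add, map_add, mul_pow, ← C_pow, ← C_pow]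
      simp only [Nat.add_sub_cancel]
      ring

/-- The rescaled discrete q-Hermite polynomials II, given by
`h_0 = 1`, `h_{n+1} = q^n·x·h_n − [n]_q·s·h_{n−1}`, satisfy
`D_q h_n(x,s;q) = [n]_q · h_{n−1}(qx,s;q)` for all `n ≥ 1`, where the
q-derivative acts in `x` and `h_{n−1}(qx,s;q)` is the substitution `x ↦ qx`. -/
theorem discrete_qHermite_qDeriv (h : ℕ → Ax)
    (h0 : h 0 = 1)
    (hrec : ∀ n : ℕ, h (n + 1) =
      Polynomial.C (Polynomial.C (q ^ n)) * X * h n -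
        Polynomial.C (Polynomial.C (qInt n) * Polynomial.X) * h (n - 1)) :
    ∀ n : ℕ, qDeriv (h (n + 1)) =
      Polynomial.C (Polynomial.C (qInt (n + 1))) *
        (h n).comp (Polynomial.C (Polynomial.C q) * X) := by
  have key : ∀ n : ℕ, qDeriv (h n) =
      Polynomial.C (Polynomial.C (qInt n)) *
        (h (n - 1)).comp (Polynomial.C (Polynomial.C q) * X) := by
    intro n
    induction n using Nat.twoStepInduction with
    | zero =>
      have : (1 : Ax) = monomial 0 1 := by simp
      rw [h0, this, qDeriv_monomial, qInt_zero]
      simp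
    | one =>
      have h1 : h 1 = X := by
        rw [hrec 0]; simp [qInt_zero, h0]
      rw [h1, ← monomial_one_one_eq_X, qDeriv_monomial]
      simp [h0]
    | more n ih1 ih2 =>
      have e2 : h (n + 2) =
          Polynomial.C (Polynomial.C (q ^ (n + 1))) * (X * h (n + 1)) -
            Polynomial.C (Polynomial.C (qInt (n + 1)) * Polynomial.X) * h n := by
        rw [hrec (n + 1)]; simp only [Nat.add_sub_cancel, mul_assoc]
      rw [e2, qDeriv_sub, qDeriv_C_mul, qDeriv_C_mul, qDeriv_X_mul, ih1, ih2]
      have ecomp : (h (n + 1)).comp (Polynomial.C (Polynomial.C q) * X) =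
          Polynomial.C (Polynomial.C (q ^ n)) * (Polynomial.C (Polynomial.C q) * X) *
            (h n).comp (Polynomial.C (Polynomial.C q) * X) -
          Polynomial.C (Polynomial.C (qInt n) * Polynomial.X) *
            (h (n - 1)).comp (Polynomial.C (Polynomial.C q) * X) := by
        rw [hrec n]; simp only [sub_comp, mul_comp, C_comp, X_comp]
      have hn21 : n + 2 - 1 = n + 1 := rfl
      simp only [Nat.add_sub_cancel, hn21] at ih2 ⊢
      rw [ecomp]
      rw [qInt_succ (n + 1), qInt_succ n]
      simp only [map_add, map_mul, ← C_pow, pow_succ, add_mul]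
      ring
  intro n
  rw [key (n + 1)]
  simp

end
end

section
/- The inversion formula for Fibonacci polynomials: x^n = Σ_{2k≤n+1} (C(n,k) − C(n,k−1))·s^k·f_{n+1−2k}(x,−s), where f_m are the Fibonacci polynomials. -/
open Polynomial

private def acoef (n k : ℕ) : ℤ :=
  (n.choose k : ℤ) - if k = 0 then 0 else (n.choose (k - 1) : ℤ)

private lemma acoef_pascal (n k : ℕ) :
    acoef n k + (if k = 0 then 0 else acoef n (k - 1)) = acoef (n + 1) k := by
  match k with
  | 0 => simp [acoef]
  | 1 => simp [acoef, Nat.choose_succ_succ]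
  | (j+2) => simp [acoef, Nat.choose_succ_succ]; ring

private lemma acoef_mid (n k : ℕ) (h : 2 * k = n + 1) : acoef n k = 0 := by
  have hk : k ≠ 0 := by omega
  have h2 : n.choose (k - 1) = n.choose k := by
    rw [← Nat.choose_symm (show k ≤ n by omega)]
    congr 1
    omega
  simp [acoef, hk, h2]

private lemma key (fneg : ℕ → Polynomial (Polynomial ℤ))
    (h0 : fneg 0 = 0) (h1 : fneg 1 = 1)
    (hrec : ∀ n : ℕ, fneg (n + 2) = X * fneg (n + 1) - Polynomial.C Polynomial.X * fneg n) :
    ∀ n : ℕ, (X : Polynomial (Polynomial ℤ)) ^ n =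
      ∑ k ∈ Finset.range (n + 1),
        Polynomial.C (Polynomial.C (acoef n k) * Polynomial.X ^ k) * fneg (n + 1 - 2 * k) := by
  intro n
  induction n with
  | zero => simp [acoef, h1]
  | succ n ih =>
    have step : ∀ k : ℕ,
        Polynomial.C (Polynomial.C (acoef n k) * Polynomial.X ^ k) * (X * fneg (n + 1 - 2 * k)) =
        Polynomial.C (Polynomial.C (acoef n k) * Polynomial.X ^ k) * fneg (n + 2 - 2 * k)
        + Polynomial.C (Polynomial.C (acoef n k) * Polynomial.X ^ (k + 1)) * fneg (n - 2 * k) := by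
      intro k
      rcases lt_trichotomy (2 * k) (n + 1) with hlt | heq | hgt
      · have e1 : n + 1 - 2 * k = (n - 2 * k) + 1 := by omega
        have e2 : n + 2 - 2 * k = (n - 2 * k) + 2 := by omega
        have hC : Polynomial.C (Polynomial.C (acoef n k) * Polynomial.X ^ (k + 1)) =
            Polynomial.C (Polynomial.C (acoef n k) * Polynomial.X ^ k) *
              Polynomial.C Polynomial.X := by
          rw [pow_succ, ← mul_assoc, map_mul]
        rw [e1, e2, hrec (n - 2 * k), hC]
        ring
      · have e1 : n + 1 - 2 * k = 0 := by omega
        have e2 : n + 2 - 2 * k = 1 := by omega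
        have e3 : n - 2 * k = 0 := by omega
        rw [e1, e2, e3, h0, h1, acoef_mid n k heq]
        simp
      · have e1 : n + 1 - 2 * k = 0 := by omega
        have e2 : n + 2 - 2 * k = 0 := by omega
        have e3 : n - 2 * k = 0 := by omega
        rw [e1, e2, e3, h0]
        simp
    have expand : ∑ k ∈ Finset.range (n + 2),
        Polynomial.C (Polynomial.C (acoef (n + 1) k) * Polynomial.X ^ k) * fneg (n + 2 - 2 * k)
        = (∑ k ∈ Finset.range (n + 2),
            Polynomial.C (Polynomial.C (acoef n k) * Polynomial.X ^ k) * fneg (n + 2 - 2 * k))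
        + (∑ k ∈ Finset.range (n + 2),
            Polynomial.C (Polynomial.C (if k = 0 then (0:ℤ) else acoef n (k - 1)) *
              Polynomial.X ^ k) * fneg (n + 2 - 2 * k)) := by
      rw [← Finset.sum_add_distrib]
      refine Finset.sum_congr rfl fun k _ => ?_
      rw [← add_mul, ← map_add, ← add_mul, ← map_add, acoef_pascal]
    have eu : ∑ k ∈ Finset.range (n + 2),
        Polynomial.C (Polynomial.C (acoef n k) * Polynomial.X ^ k) * fneg (n + 2 - 2 * k)
        = ∑ k ∈ Finset.range (n + 1),
        Polynomial.C (Polynomial.C (acoef n k) * Polynomial.X ^ k) * fneg (n + 2 - 2 * k) := by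
      rw [Finset.sum_range_succ]
      have : n + 2 - 2 * (n + 1) = 0 := by omega
      rw [this, h0, mul_zero, add_zero]
    have ew : ∑ k ∈ Finset.range (n + 2),
        Polynomial.C (Polynomial.C (if k = 0 then (0:ℤ) else acoef n (k - 1)) *
          Polynomial.X ^ k) * fneg (n + 2 - 2 * k)
        = ∑ k ∈ Finset.range (n + 1),
        Polynomial.C (Polynomial.C (acoef n k) * Polynomial.X ^ (k + 1)) * fneg (n - 2 * k) := by
      rw [Finset.sum_range_succ']
      have h00 : Polynomial.C (Polynomial.C (if (0:ℕ) = 0 then (0:ℤ) else acoef n (0 - 1)) *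
          Polynomial.X ^ 0) * fneg (n + 2 - 2 * 0) = 0 := by simp
      rw [h00, add_zero]
      refine Finset.sum_congr rfl fun k _ => ?_
      have e4 : n + 2 - 2 * (k + 1) = n - 2 * k := by omega
      simp [e4]
    calc (X : Polynomial (Polynomial ℤ)) ^ (n + 1)
        = X * (X : Polynomial (Polynomial ℤ)) ^ n := by ring
      _ = X * ∑ k ∈ Finset.range (n + 1),
            Polynomial.C (Polynomial.C (acoef n k) * Polynomial.X ^ k) *
              fneg (n + 1 - 2 * k) := by rw [← ih]
      _ = ∑ k ∈ Finset.range (n + 1),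
            Polynomial.C (Polynomial.C (acoef n k) * Polynomial.X ^ k) *
              (X * fneg (n + 1 - 2 * k)) := by
            rw [Finset.mul_sum]; exact Finset.sum_congr rfl fun k _ => by ring
      _ = ∑ k ∈ Finset.range (n + 1),
            (Polynomial.C (Polynomial.C (acoef n k) * Polynomial.X ^ k) * fneg (n + 2 - 2 * k)
            + Polynomial.C (Polynomial.C (acoef n k) * Polynomial.X ^ (k + 1)) *
              fneg (n - 2 * k)) := Finset.sum_congr rfl fun k _ => step k
      _ = _ := by rw [Finset.sum_add_distrib, ← eu, ← ew, ← expand]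

/-- Inversion formula for Fibonacci polynomials, in `ℤ[s][x]`:
`x^n = Σ_{2k≤n+1} (C(n,k) − C(n,k−1))·s^k·f_{n+1−2k}(x,−s)`, with
`C(n,−1) = 0` (the `if` guard).  Here `fneg m = f_m(x,−s)`: `fneg 0 = 0`,
`fneg 1 = 1`, `fneg m = x·fneg_{m−1} − s·fneg_{m−2}`. -/
theorem fibonacci_inversion (fneg : ℕ → Polynomial (Polynomial ℤ))
    (h0 : fneg 0 = 0)
    (h1 : fneg 1 = 1)
    (hrec : ∀ n : ℕ, fneg (n + 2) = X * fneg (n + 1) - Polynomial.C Polynomial.X * fneg n) :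
    ∀ n : ℕ,
      (X : Polynomial (Polynomial ℤ)) ^ n =
        ∑ k ∈ Finset.range ((n + 1) / 2 + 1),
          Polynomial.C (Polynomial.C ((n.choose k : ℤ) -
              if k = 0 then 0 else (n.choose (k - 1) : ℤ)) * Polynomial.X ^ k) *
            fneg (n + 1 - 2 * k) := by
  intro n
  have h := key fneg h0 h1 hrec n
  have hsub : Finset.range ((n + 1) / 2 + 1) ⊆ Finset.range (n + 1) := by
    apply Finset.range_subset_range.mpr; omega
  have hz : ∀ k ∈ Finset.range (n + 1), k ∉ Finset.range ((n + 1) / 2 + 1) →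
      Polynomial.C (Polynomial.C (acoef n k) * Polynomial.X ^ k) * fneg (n + 1 - 2 * k) = 0 := by
    intro k _ hk
    rw [Finset.mem_range, not_lt] at hk
    have : n + 1 - 2 * k = 0 := by omega
    rw [this, h0, mul_zero]
  rw [h, ← Finset.sum_subset hsub hz]
  simp only [acoef]
end

section
/- The q-Lucas polynomials L_n(x,s) = l_n(x + (q−1)s·D_q, s)·1 have explicit formula L_n(x,s) = Σ_{k=0}^{⌊n/2⌋} q^{C(k,2)}·([n]_q/[n−k]_q)·qbinom(n−k,k)·s^k·x^{n−2k} for n > 0, and L_0 = 1. -/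
open Polynomial

noncomputable section

def qFact (n : ℕ) : Kq := ∏ i ∈ Finset.range n, qInt (i + 1)
def qChoose (n k : ℕ) : Kq := qFact n / (qFact k * qFact (n - k))
/-- The operator `X = (mult. by x) + (q−1)s·D_q`. -/
def opX (p : Ax) : Ax :=
  X * p + Polynomial.C ((Polynomial.C q - 1) * Polynomial.X) * qDeriv p

/-!
Write `L_n = ∑ₖ c(n, k) sᵏ x^(n - 2k)`. Since `[e]_q (q - 1) = q^e - 1`, the operator acts on monomials
by `X xᵉ = x^(e+1) + (q^e - 1) s x^(e-1)`, so the recurrence `L_{n+1} = X L_n + s L_{n-1}` compares the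
coefficients of `sᵏ xᵃ` as `c(n+1, k) = c(n, k) + (q^(a+1) - 1) c(n, k-1) + c(n-1, k-1)`. In terms of
q-factorials this is a rational identity in `q`, checked by clearing denominators. `L_1` and `L_2` are
computed directly.
-/

lemma q_pow_ne_one {m : ℕ} (hm : m ≠ 0) : q ^ m ≠ 1 := by
  rw [q, ← RatFunc.algebraMap_X, ← map_pow, ← map_one (algebraMap ℚ[X] Kq),
    (RatFunc.algebraMap_injective ℚ).ne_iff]
  intro h
  simpa [hm] using congrArg natDegree h

lemma q_pow_sub_one_ne_zero {m : ℕ} (hm : m ≠ 0) : q ^ m - 1 ≠ 0 :=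
  sub_ne_zero.mpr (q_pow_ne_one hm)

lemma q_sub_one_ne_zero : q - 1 ≠ 0 := by
  simpa using q_pow_sub_one_ne_zero one_ne_zero

lemma qInt_eq (m : ℕ) : qInt m = (q ^ m - 1) / (q - 1) := by
  rw [eq_div_iff q_sub_one_ne_zero, qInt, geom_sum_mul]

lemma sub_one_mul_qInt (m : ℕ) : (q - 1) * qInt m = q ^ m - 1 := by
  rw [qInt_eq, mul_div_cancel₀ _ q_sub_one_ne_zero]

lemma qInt_ne_zero {m : ℕ} (hm : m ≠ 0) : qInt m ≠ 0 := by
  rw [qInt_eq]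
  exact div_ne_zero (q_pow_sub_one_ne_zero hm) q_sub_one_ne_zero

lemma qFact_zero : qFact 0 = 1 := Finset.prod_range_zero _

lemma qFact_one : qFact 1 = 1 := by simp [qFact, qInt]

lemma qFact_succ (n : ℕ) : qFact (n + 1) = qFact n * qInt (n + 1) :=
  Finset.prod_range_succ _ _

lemma qFact_ne_zero (n : ℕ) : qFact n ≠ 0 :=
  Finset.prod_ne_zero_iff.mpr fun i _ => qInt_ne_zero i.succ_ne_zero

def qLucasCoeff (n k : ℕ) : Kq := q ^ k.choose 2 * (qInt n / qInt (n - k)) * qChoose (n - k) k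

lemma qLucasCoeff_zero_right {n : ℕ} (hn : n ≠ 0) : qLucasCoeff n 0 = 1 := by
  simp [qLucasCoeff, qChoose, qInt_ne_zero hn, qFact_ne_zero, qFact_zero]

lemma qLucasCoeff_add_two_mul (a k : ℕ) : qLucasCoeff (a + 2 * k) k =
    q ^ k.choose 2 * (qInt (a + 2 * k) / qInt (a + k)) * (qFact (a + k) / (qFact k * qFact a)) := by
  rw [qLucasCoeff, qChoose, show a + 2 * k - k = a + k by omega, Nat.add_sub_cancel]

lemma qLucasCoeff_rec (a k : ℕ) :
    qLucasCoeff (a + 2 * k + 3) (k + 1) = qLucasCoeff (a + 2 * k + 2) (k + 1)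
      + (q ^ (a + 2) - 1) * qLucasCoeff (a + 2 * k + 2) k + qLucasCoeff (a + 2 * k + 1) k := by
  rw [show a + 2 * k + 3 = a + 1 + 2 * (k + 1) by ring, show a + 2 * k + 2 = a + 2 * (k + 1) by ring,
    qLucasCoeff_add_two_mul, qLucasCoeff_add_two_mul, show a + 2 * (k + 1) = a + 2 + 2 * k by ring,
    qLucasCoeff_add_two_mul, show a + 2 * k + 1 = a + 1 + 2 * k by ring, qLucasCoeff_add_two_mul,
    show a + 1 + (k + 1) = a + k + 2 by ring, show a + (k + 1) = a + k + 1 by ring,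
    show a + 2 + k = a + k + 2 by ring, show a + 1 + k = a + k + 1 by ring,
    qFact_succ (a + k + 1), qFact_succ (a + k), qFact_succ k, qFact_succ (a + 1), qFact_succ a,
    Nat.choose_succ_left _ _ (by omega), Nat.choose_one_right]
  field_simp [qFact_ne_zero, qInt_ne_zero]
  simp only [qInt_eq]
  field_simp [q_sub_one_ne_zero]
  ring

/-- The analogous identity for `qLucasCoeff 2 1` fails, as it would involve the junk value
`qLucasCoeff 0 0 = 0 / 0 = 0`; hence `L_2` is a base case. -/
lemma qLucasCoeff_rec_zero (k : ℕ) :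
    qLucasCoeff (2 * k + 4) (k + 2) = (q - 1) * qLucasCoeff (2 * k + 3) (k + 1)
      + qLucasCoeff (2 * k + 2) (k + 1) := by
  rw [show 2 * k + 4 = 0 + 2 * (k + 2) by ring, show 2 * k + 3 = 1 + 2 * (k + 1) by ring,
    show 2 * k + 2 = 0 + 2 * (k + 1) by ring, qLucasCoeff_add_two_mul, qLucasCoeff_add_two_mul,
    qLucasCoeff_add_two_mul]
  simp only [zero_add, qFact_zero, qFact_one, mul_one, add_comm 1]
  rw [qFact_succ (k + 1), Nat.choose_succ_left _ _ (by omega), Nat.choose_one_right]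
  field_simp [qFact_ne_zero, qInt_ne_zero]
  simp only [qInt_eq]
  field_simp [q_sub_one_ne_zero]
  ring

lemma coeff_qDeriv (p : Ax) (e : ℕ) : (qDeriv p).coeff e = C (qInt (e + 1)) * p.coeff (e + 1) := by
  induction p using Polynomial.induction_on' with
  | add p r hp hr => rw [qDeriv_add, coeff_add, hp, hr, coeff_add, mul_add]
  | monomial m a =>
    rw [qDeriv, sum_monomial_index _ _ (by simp)]
    rcases m with _ | m
    · simp [qInt]
    · rw [← C_mul, Nat.add_sub_cancel, coeff_C_mul_X_pow, coeff_monomial]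
      rcases eq_or_ne e m with rfl | h
      · simp [mul_comm]
      · simp [h, h.symm]

lemma coeff_opX (p : Ax) (e : ℕ) :
    (opX p).coeff e = (X * p).coeff e + C (q ^ (e + 1) - 1) * (X * p.coeff (e + 1)) := by
  rw [opX, coeff_add, coeff_C_mul, coeff_qDeriv, ← sub_one_mul_qInt]
  simp only [map_mul, map_sub, map_one]
  ring

def qLucasSum (n : ℕ) : Ax := ∑ k ∈ Finset.range (n / 2 + 1),
  C (C (qLucasCoeff n k) * X ^ k) * X ^ (n - 2 * k)

lemma coeff_coeff_qLucasSum (n a k : ℕ) :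
    ((qLucasSum n).coeff a).coeff k = if a + 2 * k = n then qLucasCoeff n k else 0 := by
  simp only [qLucasSum, finsetSum_coeff, coeff_C_mul_X_pow, apply_ite (coeff · k), coeff_zero,
    ← ite_and, and_comm (a := a = _)]
  simp only [ite_and, Finset.sum_ite_eq, Finset.mem_range]
  split_ifs <;> first | rfl | omega

lemma qLucasSum_add_three (n : ℕ) :
    qLucasSum (n + 3) = opX (qLucasSum (n + 2)) + C X * qLucasSum (n + 1) := by
  ext a k
  rw [coeff_add, coeff_opX, coeff_C_mul, coeff_add, coeff_add, coeff_C_mul]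
  rcases a with _ | a <;> rcases k with _ | k <;>
    simp only [coeff_X_mul, coeff_X_mul_zero, coeff_coeff_qLucasSum, coeff_zero, zero_add,
      mul_zero, add_zero]
  · rw [if_neg (by omega)]
  · by_cases h : 2 * (k + 1) = n + 3
    · obtain ⟨j, rfl, rfl⟩ : ∃ j, k = j + 1 ∧ n = 2 * j + 1 := ⟨k - 1, by omega, by omega⟩
      rw [if_pos h, if_pos (by omega), if_pos (by omega), pow_one]
      convert qLucasCoeff_rec_zero j using 3
    · rw [if_neg h, if_neg (by omega), if_neg (by omega), mul_zero, add_zero]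
  · by_cases h : a = n + 2
    · rw [if_pos (by omega), if_pos h, qLucasCoeff_zero_right (by omega),
        qLucasCoeff_zero_right (by omega)]
    · rw [if_neg (by omega), if_neg h]
  · by_cases h : n = a + 2 * k
    · subst h
      rw [if_pos (by omega), if_pos (by omega), if_pos (by omega), if_pos (by omega)]
      exact qLucasCoeff_rec a k
    · rw [if_neg (by omega), if_neg (by omega), if_neg (by omega), if_neg (by omega), mul_zero,
        add_zero, add_zero]

lemma qDeriv_one : qDeriv 1 = 0 := by
  ext e : 1
  simp [coeff_qDeriv, coeff_one]

lemma qDeriv_X : qDeriv X = 1 := by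
  ext e : 1
  rcases e with _ | e <;> simp [coeff_qDeriv, coeff_X, coeff_one, qInt]

lemma opX_one : opX 1 = X := by simp [opX, qDeriv_one]

lemma qLucasSum_one : qLucasSum 1 = opX 1 := by
  simp [qLucasSum, opX_one, qLucasCoeff_zero_right]

lemma qLucasSum_two : qLucasSum 2 = opX (opX 1) + 2 * C X := by
  have h21 : qLucasCoeff 2 1 = 1 + q := by
    simp [qLucasCoeff, qChoose, qFact, qInt, Finset.sum_range_succ]
  rw [opX_one, opX, qDeriv_X]
  norm_num [qLucasSum, Finset.sum_range_succ, qLucasCoeff_zero_right, h21]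
  ring

theorem qLucas_explicit_general (L : ℕ → Ax)
    (h1 : L 1 = opX 1)
    (h2 : L 2 = opX (opX 1) + 2 * Polynomial.C Polynomial.X)
    (hrec : ∀ n : ℕ, L (n + 3) = opX (L (n + 2)) + Polynomial.C Polynomial.X * L (n + 1)) :
    ∀ n : ℕ, 1 ≤ n →
      L n = ∑ k ∈ Finset.range (n / 2 + 1),
        Polynomial.C (Polynomial.C (q ^ k.choose 2 * (qInt n / qInt (n - k)) *
            qChoose (n - k) k) * Polynomial.X ^ k) * X ^ (n - 2 * k) := by
  have hL : ∀ n, L (n + 1) = qLucasSum (n + 1) ∧ L (n + 2) = qLucasSum (n + 2) := by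
    intro n
    induction n with
    | zero => exact ⟨h1.trans qLucasSum_one.symm, h2.trans qLucasSum_two.symm⟩
    | succ n ih => exact ⟨ih.2, by rw [hrec, ih.1, ih.2, qLucasSum_add_three]⟩
  intro n hn
  obtain ⟨m, rfl⟩ := Nat.exists_eq_add_of_le' hn
  exact (hL m).1

/-- The q-Lucas polynomials `L_n(x,s) = l_n(x + (q−1)s·D_q, s)·1`,
i.e. `L_0 = 1`, `L_1 = X·1`, `L_2 = X(X·1) + 2s`, `L_n = X(L_{n−1}) + s·L_{n−2}`
for `n ≥ 3` where `X = (x·) + (q−1)s·D_q`, satisfy for `n ≥ 1`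
`L_n(x,s) = Σ_{k=0}^{⌊n/2⌋} q^{C(k,2)}·([n]_q/[n−k]_q)·qbinom(n−k,k)·s^k·x^{n−2k}`. -/
theorem qLucas_explicit (L : ℕ → Ax)
    (h0 : L 0 = 1)
    (h1 : L 1 = opX 1)
    (h2 : L 2 = opX (opX 1) + 2 * Polynomial.C Polynomial.X)
    (hrec : ∀ n : ℕ, L (n + 3) = opX (L (n + 2)) + Polynomial.C Polynomial.X * L (n + 1)) :
    ∀ n : ℕ, 1 ≤ n →
      L n = ∑ k ∈ Finset.range (n / 2 + 1),
        Polynomial.C (Polynomial.C (q ^ k.choose 2 * (qInt n / qInt (n - k)) *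
            qChoose (n - k) k) * Polynomial.X ^ k) * X ^ (n - 2 * k) :=
  qLucas_explicit_general L h1 h2 hrec

end
end
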